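/- arXiv:math/0703262 — 2 statements merged into one kernel-verified Lean document; each statement's English description precedes it below -/
import Mathlib

section
/- Every word in the list L_n is a word w_1 w_2 ... w_n with w_1 = 2 and, for each 1 ≤ j < n, 2 ≤ w_{j+1} ≤ w_j + 1 (i.e., each word is a path in the Catalan generating tree). -/
def lastD (w : List Nat) : Nat := w.getLastD 0

/-- Shifted production for the Catalan rule:
`sC k 2 = [2, k+1, k, ..., 3]` and, for `3 ≤ i ≤ k+1`,
`sC k i = [i, i+1, ..., k+1, 2, 3, ..., i-1]`. -/
def sC (k i : Nat) : List Nat :=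
  if i = 2 then 2 :: (List.range (k - 1)).map (fun t => k + 1 - t)
  else (List.range (k + 2 - i)).map (fun t => i + t) ++
       (List.range (i - 2)).map (fun t => 2 + t)

/-- Builds the sublists `L_n^i` from the previous level, carrying the
starting digit of the next shifted production. -/
def graySubsAux : Nat → List (List Nat) → List (List (List Nat))
  | _, [] => []
  | j, w :: ws =>
    let sub := (sC (lastD w) j).map (fun d => w ++ [d])
    sub :: graySubsAux (lastD (sub.getLastD [])) ws

def graySubs (prev : List (List Nat)) : List (List (List Nat)) :=
  graySubsAux 2 prev

/-- The Gray code list `L_n` for the Catalan succession rule. -/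
def grayL : Nat → List (List Nat)
  | 0 => []
  | 1 => [[2]]
  | n + 2 => (graySubs (grayL (n + 1))).flatten

/-- `w` is a path from the root in the Catalan generating tree:
`w₁ = 2` and `2 ≤ w_{j+1} ≤ w_j + 1`. -/
def isTreeWord (w : List Nat) : Prop :=
  w.head? = some 2 ∧ ∀ j, j + 1 < w.length →
    2 ≤ w.getD (j + 1) 0 ∧ w.getD (j + 1) 0 ≤ w.getD j 0 + 1

/-!
The words of `L_{n+1}` are the one-letter extensions `w ++ [d]` of the words `w` of `L_n` with
`d` drawn from a production `s(k, i)`, `k` the last letter of `w`. The starting digit `i` that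
is carried from one sublist to the next stays in `{2, 3}`, because `s(k, 2)` ends in `3` and
`s(k, 3)` ends in `2`; and for `2 ≤ i ≤ k + 1` every letter of `s(k, i)` lies in `[2, k + 1]`,
which is exactly the Catalan succession rule.
-/

lemma lastD_eq_getD (w : List Nat) : lastD w = w.getD (w.length - 1) 0 := by
  rw [lastD, List.getLastD_eq_getLast?, List.getLast?_eq_getElem?, List.getD_eq_getElem?_getD]

namespace isTreeWord

variable {w : List Nat}

lemma ne_nil (h : isTreeWord w) : w ≠ [] := by
  rintro rfl
  simp [isTreeWord] at h

lemma two_le_getD (h : isTreeWord w) {j : Nat} (hj : j < w.length) : 2 ≤ w.getD j 0 := by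
  cases j with
  | zero =>
    obtain ⟨a, l, rfl⟩ := List.exists_cons_of_ne_nil h.ne_nil
    simp_all [isTreeWord]
  | succ j => exact (h.2 j hj).1

lemma two_le_lastD (h : isTreeWord w) : 2 ≤ lastD w := by
  have hpos : 0 < w.length := List.length_pos_iff.mpr h.ne_nil
  rw [lastD_eq_getD]
  exact h.two_le_getD (by omega)

lemma append_singleton {d : Nat} (h : isTreeWord w) (hd2 : 2 ≤ d) (hd : d ≤ lastD w + 1) :
    isTreeWord (w ++ [d]) := by
  have hpos : 0 < w.length := List.length_pos_iff.mpr h.ne_nil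
  refine ⟨?_, fun j hj => ?_⟩
  · obtain ⟨a, l, rfl⟩ := List.exists_cons_of_ne_nil h.ne_nil
    simpa using h.1
  · simp only [List.length_append, List.length_singleton] at hj
    rw [List.getD_append w [d] 0 j (by omega)]
    rcases Nat.lt_or_ge (j + 1) w.length with hlt | hge
    · rw [List.getD_append w [d] 0 (j + 1) hlt]
      exact h.2 j hlt
    · obtain rfl : j = w.length - 1 := by omega
      rw [List.getD_append_right w [d] 0 _ hge, ← lastD_eq_getD,
        show w.length - 1 + 1 - w.length = 0 by omega]
      exact ⟨hd2, hd⟩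

end isTreeWord

lemma isTreeWord_singleton_two : isTreeWord [2] :=
  ⟨rfl, fun j hj => absurd hj (by simp)⟩

lemma mem_sC_bounds {k i d : Nat} (hi : 2 ≤ i) (hik : i ≤ k + 1) (hd : d ∈ sC k i) :
    2 ≤ d ∧ d ≤ k + 1 := by
  unfold sC at hd
  split_ifs at hd
  · simp only [List.mem_cons, List.mem_map, List.mem_range] at hd
    rcases hd with rfl | ⟨t, ht, rfl⟩ <;> omega
  · simp only [List.mem_append, List.mem_map, List.mem_range] at hd
    rcases hd with ⟨t, ht, rfl⟩ | ⟨t, ht, rfl⟩ <;> omega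

lemma lastD_sC_two_or_three (k : Nat) {i : Nat} (hi : i = 2 ∨ i = 3) :
    lastD (sC k i) = 2 ∨ lastD (sC k i) = 3 := by
  rcases hi with rfl | rfl
  · rw [sC, if_pos rfl]
    cases hk : k - 1 with
    | zero => simp [lastD]
    | succ m =>
      rw [List.range_succ, List.map_append, List.map_singleton, ← List.cons_append, lastD,
        List.getLastD_concat]
      omega
  · simp [sC, lastD]

lemma lastD_getLastD_map_append (w l : List Nat) :
    lastD ((l.map fun d => w ++ [d]).getLastD []) = lastD l := by
  simp only [lastD, List.getLastD_eq_getLast?, List.getLast?_map]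
  cases l.getLast? <;> simp

lemma exists_of_mem_flatten_graySubsAux {ws : List (List Nat)} {j : Nat} {v : List Nat}
    (hj : j = 2 ∨ j = 3) (hv : v ∈ (graySubsAux j ws).flatten) :
    ∃ w ∈ ws, ∃ i, (i = 2 ∨ i = 3) ∧ ∃ d ∈ sC (lastD w) i, v = w ++ [d] := by
  induction ws generalizing j with
  | nil => simp [graySubsAux] at hv
  | cons w ws ih =>
    simp only [graySubsAux, List.flatten_cons, List.mem_append, List.mem_map] at hv
    rcases hv with ⟨d, hd, rfl⟩ | hv
    · exact ⟨w, List.mem_cons_self, j, hj, d, hd, rfl⟩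
    · rw [lastD_getLastD_map_append] at hv
      obtain ⟨u, hu, rest⟩ := ih (lastD_sC_two_or_three _ hj) hv
      exact ⟨u, List.mem_cons_of_mem _ hu, rest⟩

theorem stmt4_general (n : Nat) (w : List Nat) (hw : w ∈ grayL n) :
    w.length = n ∧ isTreeWord w := by
  induction n using grayL.induct generalizing w with
  | case1 => simp [grayL] at hw
  | case2 =>
    obtain rfl : w = [2] := by simpa [grayL] using hw
    exact ⟨rfl, isTreeWord_singleton_two⟩
  | case3 n ih =>
    obtain ⟨u, hu, i, hi, d, hd, rfl⟩ := exists_of_mem_flatten_graySubsAux (Or.inl rfl) hw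
    obtain ⟨hlen, htree⟩ := ih u hu
    have hk := htree.two_le_lastD
    obtain ⟨hd2, hdk⟩ := mem_sC_bounds (by omega) (by omega) hd
    exact ⟨by simp [hlen], htree.append_singleton hd2 hdk⟩

/-- Every word of `L_n` is a length-`n` path in the Catalan generating tree. -/
theorem stmt4 (n : Nat) (hn : 1 ≤ n) (w : List Nat) (hw : w ∈ grayL n) :
    w.length = n ∧ isTreeWord w :=
  stmt4_general n w hw
end

section
/- If two generating-tree words of length n differ in exactly one digit, then their corresponding Dyck binary strings (of length 2n) differ in exactly two bits. -/
def zeros (m : Nat) : List Bool := List.replicate m false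

/-- Appending digit `i` after a word ending in digit `k`: replace the final
`k - 1` zeros by `k + 1 - i` zeros, a one, and `i - 1` zeros. -/
def encStep (u : List Bool) (k i : Nat) : List Bool :=
  u.take (u.length - (k - 1)) ++ zeros (k + 1 - i) ++ [true] ++ zeros (i - 1)

def encAux : List Bool → Nat → List Nat → List Bool
  | u, _, [] => u
  | u, k, i :: rest => encAux (encStep u k i) i rest

/-- Encoding of a generating-tree word into a binary (Dyck) string,
starting from `10` for the word `2`. -/
def enc : List Nat → List Bool
  | [] => []
  | _ :: rest => encAux [true, false] 2 rest

/-- A Dyck word: balanced, and every prefix has at least as many ones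
(`true`) as zeros (`false`). -/
def isDyck (u : List Bool) : Prop :=
  u.count true = u.count false ∧
  ∀ m, (u.take m).count false ≤ (u.take m).count true

/-- Hamming distance: number of positions where two words differ. -/
def hamming {α : Type*} [DecidableEq α] (v w : List α) : Nat :=
  ((v.zip w).filter (fun p => decide (p.1 ≠ p.2))).length


/-!
Appending a digit only rewrites the trailing run of zeros, so the encoding of `2 :: s` is a
`1` followed by one block `0^(k+1-i) 1` for each digit `i` of `s` (where `k` is the digit
before it) and a final run `0^(j-1)`, `j` the last digit. If two words differ only in one
digit, `a` versus `b`, all blocks agree except the block of that digit and the zeros that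
follow its `1`: `0^(k+1-a) 1 0^(a+1-i)` against `0^(k+1-b) 1 0^(b+1-i)`, two strings of the
same length `k+2-i` with a single `1` at different places, hence at distance two.
-/

section Hamming

variable {α : Type*} [DecidableEq α]

@[simp]
lemma hamming_nil_left (w : List α) : hamming [] w = 0 := by
  simp [hamming]

@[simp]
lemma hamming_cons_cons (a b : α) (v w : List α) :
    hamming (a :: v) (b :: w) = (if a = b then 0 else 1) + hamming v w := by
  by_cases hab : a = b <;> simp [hamming, hab, Nat.add_comm]

@[simp]
lemma hamming_self (l : List α) : hamming l l = 0 := by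
  induction l with
  | nil => rfl
  | cons a l ih => simp [ih]

lemma hamming_comm (v w : List α) : hamming v w = hamming w v := by
  induction v generalizing w with
  | nil => cases w <;> simp [hamming]
  | cons a v ih =>
    cases w with
    | nil => simp [hamming]
    | cons b w => simp [ih, eq_comm]

lemma hamming_append {A B : List α} (h : A.length = B.length) (S T : List α) :
    hamming (A ++ S) (B ++ T) = hamming A B + hamming S T := by
  induction A generalizing B with
  | nil => cases B <;> simp_all
  | cons a A ih =>
    cases B with
    | nil => simp at h
    | cons b B => simp [ih (Nat.succ.inj h), Nat.add_assoc]

lemma eq_of_hamming_eq_zero {v w : List α} (hlen : v.length = w.length)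
    (h : hamming v w = 0) : v = w := by
  induction v generalizing w with
  | nil => cases w <;> simp_all
  | cons a v ih =>
    cases w with
    | nil => simp at hlen
    | cons b w =>
      simp only [List.length_cons, Nat.add_right_cancel_iff] at hlen
      rw [hamming_cons_cons] at h
      split_ifs at h with hab
      · rw [hab, ih hlen (by simpa using h)]
      · omega

end Hamming

lemma zeros_add (m r : ℕ) : zeros (m + r) = zeros m ++ zeros r :=
  List.replicate_add m r false

lemma hamming_zeros_true_zeros {m r m' r' : ℕ} (hlen : m + r = m' + r') (hne : m ≠ m') :
    hamming (zeros m ++ true :: zeros r) (zeros m' ++ true :: zeros r') = 2 := by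
  wlog hlt : m < m' generalizing m r m' r'
  · rw [hamming_comm]; exact this hlen.symm hne.symm (by omega)
  obtain ⟨d, rfl⟩ : ∃ d, m' = m + (d + 1) := ⟨m' - m - 1, by omega⟩
  obtain rfl : r = d + (r' + 1) := by omega
  have hz : ∀ j, zeros (j + 1) = false :: zeros j := fun _ => rfl
  rw [zeros_add m, zeros_add d, hz, hz, List.append_assoc, List.cons_append,
    hamming_append rfl, hamming_cons_cons, hamming_append rfl]
  simp

def treeStep (a b : ℕ) : Prop := 2 ≤ b ∧ b ≤ a + 1

lemma isChain_treeStep_of_isTreeWord {w : List ℕ} (hw : isTreeWord w) :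
    w.IsChain treeStep := by
  refine List.isChain_iff_getElem.mpr fun j hj => ?_
  have := hw.2 j hj
  rwa [List.getD_eq_getElem _ _ hj, List.getD_eq_getElem _ _ (by omega)] at this

/-- What the encoding holds after a prefix whose last digit is `k`, counted from the start of
the `k - 1` trailing zeros of that digit. -/
def encTail : ℕ → List ℕ → List Bool
  | k, [] => zeros (k - 1)
  | k, i :: s => zeros (k + 1 - i) ++ true :: encTail i s

lemma encAux_append_zeros (s : List ℕ) (P : List Bool) (k : ℕ) :
    encAux (P ++ zeros (k - 1)) k s = P ++ encTail k s := by
  induction s generalizing P k with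
  | nil => rfl
  | cons i s ih =>
    have hstep : encStep (P ++ zeros (k - 1)) k i
        = (P ++ zeros (k + 1 - i) ++ [true]) ++ zeros (i - 1) := by
      simp [encStep, zeros]
    rw [encAux, hstep, ih]
    simp [encTail]

lemma enc_two_cons (s : List ℕ) : enc (2 :: s) = true :: encTail 2 s :=
  encAux_append_zeros s [true] 2

lemma hamming_encTail_of_ne {k a b : ℕ} (s : List ℕ) (hab : a ≠ b)
    (ha : treeStep k a) (hb : treeStep k b)
    (hsa : (a :: s).IsChain treeStep) (hsb : (b :: s).IsChain treeStep) :
    hamming (encTail k (a :: s)) (encTail k (b :: s)) = 2 := by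
  unfold treeStep at ha hb
  cases s with
  | nil => exact hamming_zeros_true_zeros (by omega) (by omega)
  | cons i s =>
    simp only [List.isChain_cons_cons, treeStep] at hsa hsb
    have hblock (c : ℕ) : encTail k (c :: i :: s)
        = (zeros (k + 1 - c) ++ true :: zeros (c + 1 - i)) ++ true :: encTail i s := by
      simp [encTail]
    rw [hblock, hblock, hamming_append (by simp [zeros]; omega),
      hamming_zeros_true_zeros (by omega) (by omega), hamming_self]

lemma hamming_encTail_of_hamming_eq_one {k : ℕ} {v w : List ℕ} (hlen : v.length = w.length)
    (hv : (k :: v).IsChain treeStep) (hw : (k :: w).IsChain treeStep)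
    (h : hamming v w = 1) : hamming (encTail k v) (encTail k w) = 2 := by
  induction v generalizing k w with
  | nil => simp at h
  | cons a v ih =>
    cases w with
    | nil => simp at hlen
    | cons b w =>
      simp only [List.length_cons, Nat.add_right_cancel_iff] at hlen
      simp only [List.isChain_cons_cons] at hv hw
      by_cases hab : a = b
      · subst hab
        simp only [hamming_cons_cons, if_pos, zero_add] at h
        simp [encTail, hamming_append, ih hlen hv.2 hw.2 h]
      · simp only [hamming_cons_cons, if_neg hab] at h
        obtain rfl : v = w := eq_of_hamming_eq_zero hlen (by omega)
        exact hamming_encTail_of_ne v hab hv.1 hw.1 hv.2 hw.2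

theorem stmt14_general (n : Nat) (v w : List Nat)
    (hv : v.length = n ∧ isTreeWord v) (hw : w.length = n ∧ isTreeWord w)
    (h : hamming v w = 1) :
    hamming (enc v) (enc w) = 2 := by
  obtain ⟨hvl, hvt⟩ := hv
  obtain ⟨hwl, hwt⟩ := hw
  obtain ⟨v, rfl⟩ : ∃ s, v = 2 :: s := ⟨v.tail, List.eq_cons_of_mem_head? hvt.1⟩
  obtain ⟨w, rfl⟩ : ∃ s, w = 2 :: s := ⟨w.tail, List.eq_cons_of_mem_head? hwt.1⟩
  simp only [hamming_cons_cons, if_pos, zero_add] at h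
  rw [enc_two_cons, enc_two_cons, hamming_cons_cons, if_pos rfl, zero_add]
  exact hamming_encTail_of_hamming_eq_one (by simpa using hvl.trans hwl.symm)
    (isChain_treeStep_of_isTreeWord hvt) (isChain_treeStep_of_isTreeWord hwt) h

/-- Two generating-tree words of length `n` differing in exactly one digit
have encodings differing in exactly two bits. -/
theorem stmt14 (n : Nat) (hn : 1 ≤ n) (v w : List Nat)
    (hv : v.length = n ∧ isTreeWord v) (hw : w.length = n ∧ isTreeWord w)
    (h : hamming v w = 1) :
    hamming (enc v) (enc w) = 2 :=
  stmt14_general n v w hv hw h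
end
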